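/- arXiv:1204.6712 — 3 statements merged into one kernel-verified Lean document; each statement's English description precedes it below -/
import Mathlib

section
/- For integers 0 ≤ k ≤ n, the limit as t → -(k+1) of (t+k+1)^2 · ((-t)_n)^2 / ((t+1)_{n+1})^2 equals binom(n+k, k)^2 · binom(n, k)^2, where (x)_m denotes the Pochhammer symbol (rising factorial). -/
/-!
Only the factor `i = k` of `(t + 1)_{n+1}` vanishes at `t = -(k + 1)`, so multiplying by
`(t + k + 1)^2` removes the double pole and the limit is the value at `-(k + 1)` of the remaining
continuous function. There the numerator is `(k + 1)_n = (n + k)! / k!` and the remaining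
denominator is `± k! (n - k)!`, whose quotient is `C(n + k, k) C(n, k)`.
-/

open Filter Finset Nat Topology

theorem tendsto_pow_sub_mul_div_pow_sub_mul {𝕜 : Type*} [NormedField 𝕜] {F G : 𝕜 → 𝕜} {a : 𝕜}
    (p : ℕ) (hF : ContinuousAt F a) (hG : ContinuousAt G a) (hGa : G a ≠ 0) :
    Tendsto (fun t => (t - a) ^ p * (F t / ((t - a) ^ p * G t))) (𝓝[≠] a) (𝓝 (F a / G a)) := by
  refine ((hF.div hG hGa).tendsto.mono_left nhdsWithin_le_nhds).congr' ?_
  filter_upwards [self_mem_nhdsWithin] with t (ht : t ≠ a)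
  rw [Pi.div_apply, ← mul_div_assoc, mul_div_mul_left _ _ (pow_ne_zero p (sub_ne_zero.mpr ht))]

theorem sq_prod_range_natCast_sub_self {R : Type*} [CommRing R] (k : ℕ) :
    (∏ i ∈ range k, ((i : R) - k)) ^ 2 = (k ! : R) ^ 2 := by
  simp_rw [← prod_pow, ← neg_sub (k : R), neg_sq, prod_pow, ← descPochhammer_eval_eq_prod_range,
    descPochhammer_eval_eq_descFactorial, descFactorial_self]

theorem ascFactorial_eq_choose_mul_choose_mul {n k : ℕ} (hk : k ≤ n) :
    (k + 1).ascFactorial n = (n + k).choose k * n.choose k * (k ! * (n - k)!) := by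
  rw [ascFactorial_eq_factorial_mul_choose, ← choose_mul_factorial_mul_factorial hk,
    add_comm k n, choose_symm_add]
  ring

theorem pochhammer_double_pole_limit (n k : ℕ) (hk : k ≤ n) :
    Tendsto (fun t : ℝ =>
        (t + k + 1) ^ 2 *
          ((∏ i ∈ range n, (-t + i)) ^ 2 / (∏ i ∈ range (n + 1), (t + 1 + i)) ^ 2))
      (nhdsWithin (-(k + 1 : ℝ)) {x | x ≠ -(k + 1 : ℝ)})
      (nhds (((n + k).choose k : ℝ) ^ 2 * ((n.choose k : ℝ)) ^ 2)) := by
  let D : ℝ → ℝ := fun t =>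
    (∏ i ∈ range k, (t + 1 + i)) * ∏ j ∈ range (n - k), (t + 1 + (k + 1 + j : ℕ))
  have hden_factor (t : ℝ) : ∏ i ∈ range (n + 1), (t + 1 + i) = (t - -(k + 1)) * D t := by
    rw [show n + 1 = k + 1 + (n - k) by omega, prod_range_add, prod_range_succ]
    ring
  have hD : D (-(k + 1)) ^ 2 = (k ! * (n - k)! : ℝ) ^ 2 := by
    rw [mul_pow, mul_pow, ← sq_prod_range_natCast_sub_self k, ← prod_range_add_one_eq_factorial]
    push_cast
    congr 2 <;> refine prod_congr rfl fun i _ => by ring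
  have hnum : ∏ i ∈ range n, (-(-(k + 1 : ℝ)) + i) = ((k + 1).ascFactorial n : ℝ) := by
    push_cast [ascFactorial_eq_prod_range]
    ring_nf
  have hlim := tendsto_pow_sub_mul_div_pow_sub_mul 2 (a := -(k + 1 : ℝ))
    (F := fun t : ℝ => (∏ i ∈ range n, (-t + i)) ^ 2) (G := fun t : ℝ => D t ^ 2)
    (by fun_prop) (by fun_prop) (by rw [hD]; positivity)
  convert hlim using 2 with t
  · rw [hden_factor, mul_pow, sub_neg_eq_add, add_assoc]
  · rfl
  · rw [hnum, hD, ascFactorial_eq_choose_mul_choose_mul hk]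
    push_cast
    field_simp
end

section
/- Let a_{k,n} = 2 b_{k,n} (H_{n+k-1} - 2H_k + H_{n-k} - φ(-k-1)) where b_{k,n} = -binom(n+k,k)² binom(n,k)² θ(-k-1), θ(t) = (t + n + ρ)/(t - n + 1) with ρ ∈ ℕ, ρ ≥ 2, and φ(t) = θ'(t)/θ(t). Then for all 0 ≤ k ≤ n: n·b_{k,n} ∈ ℤ and n·lcm(1,...,n)·a_{k,n} ∈ ℤ. -/
/-!
Write `N = n + k`, `C = C(N, k)`, `q = C(n, k)`, `D = lcm(1, …, n)` and `r = ρ + n - k - 1`.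
Then `θ(-k-1) = -r/N` and `φ(-k-1) = 1/r + 1/N`, so `n b = (nC/N) C q² r`, and `N ∣ nC`.
For `a`, write `1/N = H_N - H_{N-1}`; then every harmonic number occurring is multiplied either
by `D` with index at most `n`, or by `DC` with index at most `N`, and `r · r⁻¹ ∈ {0, 1}`.
The heart of the matter is that every `l ≤ N ≤ 2n` divides `DC`: a prime power `p^a ∣ l`
either satisfies `p^a ≤ n`, or equals `l`, and then `p^(a-1) ∣ D` while adding `k` and `n`
in base `p` carries into the digit of `p^a`, so `p ∣ C` by Kummer's theorem.
-/

open Finset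

theorem Nat.Prime.dvd_choose_add_of_lt_pow {p a m n : ℕ} (hp : p.Prime) (hm : m < p ^ a)
    (hn : n < p ^ a) (h : p ^ a ≤ n + m) : p ∣ (n + m).choose m := by
  have ha : a ≠ 0 := by rintro rfl; rw [pow_zero] at *; omega
  have hlog : Nat.log p (n + m) < a + 1 :=
    Nat.log_lt_of_lt_pow (by omega) (by rw [pow_succ]; nlinarith [hp.two_le])
  rw [hp.dvd_iff_one_le_factorization (Nat.choose_pos (by omega)).ne',
    Nat.factorization_choose' hp hlog, Finset.one_le_card]
  refine ⟨a, ?_⟩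
  simp only [mem_filter, mem_Ico, Nat.mod_eq_of_lt hm, Nat.mod_eq_of_lt hn]
  omega

theorem dvd_lcm_Icc {n l : ℕ} (hl : 0 < l) (hln : l ≤ n) : l ∣ (Icc 1 n).lcm id :=
  dvd_lcm (f := id) (mem_Icc.mpr ⟨hl, hln⟩)

theorem dvd_lcm_Icc_mul_choose_add {n k l : ℕ} (hk : k ≤ n) (hl : 0 < l) (hlnk : l ≤ n + k) :
    l ∣ (Icc 1 n).lcm id * (n + k).choose k := by
  rw [Nat.dvd_iff_prime_pow_dvd_dvd]
  intro p a hp hpa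
  have hpow_pos {b : ℕ} : 0 < p ^ b := pow_pos hp.pos b
  by_cases hpan : p ^ a ≤ n
  · exact (dvd_lcm_Icc hpow_pos hpan).mul_right _
  push Not at hpan
  have hl_eq : l = p ^ a := Nat.eq_of_dvd_of_lt_two_mul hl.ne' hpa (by omega)
  obtain ⟨a, rfl⟩ : ∃ b, a = b + 1 :=
    Nat.exists_eq_succ_of_ne_zero (by rintro rfl; rw [pow_zero] at hpan; omega)
  have hpa_le : p ^ a ≤ n := by rw [pow_succ] at hl_eq; nlinarith [hp.two_le]
  rw [pow_succ]
  exact mul_dvd_mul (dvd_lcm_Icc hpow_pos hpa_le)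
    (hp.dvd_choose_add_of_lt_pow (by omega) hpan (by omega))

theorem add_dvd_mul_choose_add (n k : ℕ) : n + k ∣ n * (n + k).choose k := by
  rcases n with _ | m
  · simp
  have h := Nat.add_one_mul_choose_eq (m + k) m
  rw [← Nat.choose_symm_add, show m + 1 + k = m + k + 1 by omega]
  exact ⟨(m + k).choose m, by rw [h]; ring⟩

theorem natCast_div_mem_bot {K : Type*} [DivisionRing K] [CharZero K] {m d : ℕ} (h : d ∣ m) :
    (m : K) / d ∈ (⊥ : Subring K) :=
  Subring.mem_bot.mpr ⟨(m / d : ℕ), by rw [Int.cast_natCast, Nat.cast_div_charZero h]⟩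

theorem Subring.mul_inv_cancel_mem {K : Type*} [DivisionRing K] (S : Subring K) (x : K) :
    x * x⁻¹ ∈ S := by
  rcases eq_or_ne x 0 with rfl | hx
  · simp
  · rw [mul_inv_cancel₀ hx]
    exact S.one_mem

theorem harmonic_sub_one_add_inv (N : ℕ) : harmonic (N - 1) + (N : ℚ)⁻¹ = harmonic N := by
  rcases N with _ | N
  · simp
  · simp [harmonic_succ]

theorem natCast_mul_harmonic_mem_bot {M m : ℕ} (h : ∀ l, 0 < l → l ≤ m → l ∣ M) :
    (M : ℚ) * harmonic m ∈ (⊥ : Subring ℚ) := by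
  rw [harmonic_eq_sum_Icc, mul_sum]
  refine Subring.sum_mem _ fun l hl => ?_
  rw [mem_Icc] at hl
  rw [← div_eq_mul_inv]
  exact natCast_div_mem_bot (h l hl.1 hl.2)

theorem natCast_mul_choose_add_div_mem_bot (n k : ℕ) :
    (n : ℚ) * (n + k).choose k / (n + k : ℕ) ∈ (⊥ : Subring ℚ) := by
  exact_mod_cast natCast_div_mem_bot (add_dvd_mul_choose_add n k)

/-- `b_{k,n}`, in terms of `r = ρ + n - k - 1`: `θ(-k-1) = -r / (n + k)`. -/
def bCoeff (n k : ℕ) (r : ℤ) : ℚ := (n + k).choose k ^ 2 * n.choose k ^ 2 * r / (n + k : ℕ)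

theorem natCast_mul_bCoeff_mem_bot (n k : ℕ) (r : ℤ) :
    (n : ℚ) * bCoeff n k r ∈ (⊥ : Subring ℚ) := by
  have hnC := natCast_mul_choose_add_div_mem_bot n k
  rw [bCoeff, show (n : ℚ) * ((n + k).choose k ^ 2 * n.choose k ^ 2 * r / (n + k : ℕ)) =
      (n * (n + k).choose k / (n + k : ℕ)) * (n + k).choose k * n.choose k ^ 2 * r by ring]
  apply_rules [mul_mem, natCast_mem, intCast_mem, pow_mem]

theorem natCast_mul_lcm_mul_bCoeff_mul_harmonic_mem_bot {n k : ℕ} (hk : k ≤ n) (r : ℤ) :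
    (n : ℚ) * (Icc 1 n).lcm id * (2 * bCoeff n k r * (2 * harmonic (n + k - 1) -
      harmonic (n + k) - 2 * harmonic k + harmonic (n - k) - (r : ℚ)⁻¹)) ∈ (⊥ : Subring ℚ) := by
  set D := (Icc 1 n).lcm id
  set C := (n + k).choose k
  have hDH : ∀ m ≤ n, (D : ℚ) * harmonic m ∈ (⊥ : Subring ℚ) := fun m hm =>
    natCast_mul_harmonic_mem_bot fun l hl hlm => dvd_lcm_Icc hl (hlm.trans hm)
  have hDCH : ∀ m ≤ n + k, ((D * C : ℕ) : ℚ) * harmonic m ∈ (⊥ : Subring ℚ) := fun m hm =>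
    natCast_mul_harmonic_mem_bot fun l hl hlm => dvd_lcm_Icc_mul_choose_add hk hl (hlm.trans hm)
  have hrr := (⊥ : Subring ℚ).mul_inv_cancel_mem (r : ℚ)
  have hnC := natCast_mul_choose_add_div_mem_bot n k
  rw [bCoeff, show (n : ℚ) * D * (2 * (C ^ 2 * n.choose k ^ 2 * r / (n + k : ℕ)) *
      (2 * harmonic (n + k - 1) - harmonic (n + k) - 2 * harmonic k + harmonic (n - k) -
        (r : ℚ)⁻¹)) =
      2 * ((n * C / (n + k : ℕ)) * n.choose k ^ 2 * r *
        (2 * (((D * C : ℕ) : ℚ) * harmonic (n + k - 1)) - ((D * C : ℕ) : ℚ) * harmonic (n + k))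
      - (n * C / (n + k : ℕ)) * C * n.choose k ^ 2 * r *
        (2 * (D * harmonic k) - D * harmonic (n - k))
      - (n * C / (n + k : ℕ)) * C * n.choose k ^ 2 * D * (r * (r : ℚ)⁻¹)) by push_cast; ring]
  apply_rules [mul_mem, sub_mem, natCast_mem, intCast_mem, pow_mem, ofNat_mem, hDH, hDCH] <;> omega

theorem coefficients_integrality_general (n ρ : ℕ) (k : ℕ) (hk : k ≤ n) :
    -- θ(t) = (t+n+ρ)/(t-n+1), φ(t) = θ'(t)/θ(t) = 1/(t+n+ρ) - 1/(t-n+1), evaluated at t = -k-1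
    let θv : ℚ := ((-(k : ℚ) - 1) + n + ρ) / ((-(k : ℚ) - 1) - n + 1)
    let φv : ℚ := 1 / ((-(k : ℚ) - 1) + n + ρ) - 1 / ((-(k : ℚ) - 1) - n + 1)
    let H : ℕ → ℚ := fun m => ∑ l ∈ Finset.Icc 1 m, (1 : ℚ) / l
    let b : ℚ := -(((n + k).choose k : ℚ)) ^ 2 * ((n.choose k : ℚ)) ^ 2 * θv
    let a : ℚ := 2 * b * (H (n + k - 1) - 2 * H k + H (n - k) - φv)
    (∃ m : ℤ, (n : ℚ) * b = m) ∧
      (∃ m : ℤ, (n : ℚ) * (((Finset.Icc 1 n).lcm id : ℕ) : ℚ) * a = m) := by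
  intro θv φv H b a
  set r : ℤ := ρ + n - k - 1
  have hden : -(k : ℚ) - 1 - n + 1 = -(n + k : ℕ) := by push_cast; ring
  have hnum : -(k : ℚ) - 1 + n + ρ = r := by push_cast [r]; ring
  have hH : ∀ m, H m = harmonic m := fun m => by simp only [H, harmonic_eq_sum_Icc, one_div]
  have hb : b = bCoeff n k r := by
    simp only [b, θv, bCoeff, hden, hnum, div_neg]
    ring
  have ha : a = 2 * b * (2 * harmonic (n + k - 1) - harmonic (n + k) - 2 * harmonic k +
      harmonic (n - k) - (r : ℚ)⁻¹) := by
    rw [← harmonic_sub_one_add_inv (n + k)]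
    simp only [a, φv, hH, hden, hnum, one_div, inv_neg]
    ring
  rw [ha, hb]
  exact ⟨(Subring.mem_bot.mp (natCast_mul_bCoeff_mem_bot n k r)).imp fun _ => Eq.symm,
    (Subring.mem_bot.mp (natCast_mul_lcm_mul_bCoeff_mul_harmonic_mem_bot hk r)).imp
      fun _ => Eq.symm⟩

theorem coefficients_integrality (n ρ : ℕ) (hρ : 2 ≤ ρ) (k : ℕ) (hk : k ≤ n) :
    -- θ(t) = (t+n+ρ)/(t-n+1), φ(t) = θ'(t)/θ(t) = 1/(t+n+ρ) - 1/(t-n+1), evaluated at t = -k-1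
    let θv : ℚ := ((-(k : ℚ) - 1) + n + ρ) / ((-(k : ℚ) - 1) - n + 1)
    let φv : ℚ := 1 / ((-(k : ℚ) - 1) + n + ρ) - 1 / ((-(k : ℚ) - 1) - n + 1)
    let H : ℕ → ℚ := fun m => ∑ l ∈ Finset.Icc 1 m, (1 : ℚ) / l
    let b : ℚ := -(((n + k).choose k : ℚ)) ^ 2 * ((n.choose k : ℚ)) ^ 2 * θv
    let a : ℚ := 2 * b * (H (n + k - 1) - 2 * H k + H (n - k) - φv)
    (∃ m : ℤ, (n : ℚ) * b = m) ∧
      (∃ m : ℤ, (n : ℚ) * (((Finset.Icc 1 n).lcm id : ℕ) : ℚ) * a = m) :=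
  coefficients_integrality_general n ρ k hk
end

section
/- The sequence q_n = ∑_{k=0}^{n} binom(n+k,k)² binom(n,k)² satisfies the Apéry recurrence (n+1)³ q_{n+1} - (2n+1)(17n²+17n+5) q_n + n³ q_{n-1} = 0 for all n ≥ 1, with q_0 = 1 and q_1 = 5. -/
/-!
Creative telescoping (Zeilberger; van der Poorten's account of Apéry's proof). Write
`a(n, k) = C(n+k, k)² C(n, k)²` for the summand and put `G(n, 0) = 0`,
`G(n, k + 1) = 4 (2n+1) (k (2k+1) - (2n+1)²) a(n, k)`. Then the Apéry operator applied to
`a(·, k)` at `n + 1` equals `G(n + 1, k + 1) - G(n + 1, k)`, a rational-function identity once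
every binomial coefficient is written as a multiple of `C(n+k+3, k+1)` or `C(n+2, k+1)` through
the ratio identities for neighbouring binomials; these hold for all `k`, so the boundary terms
need no separate treatment.
Summing over `k` telescopes to `G(n + 1, n + 3)`, which vanishes because `C(n+1, n+2) = 0`.
-/

open Finset

section ChooseCast

variable {K : Type*} [Field K] [CharZero K]

theorem Nat.cast_choose_eq_mul_cast_choose_succ_left (n k : ℕ) :
    (n.choose k : K) = (n + 1 - k) / (n + 1) * ((n + 1).choose k : K) := by
  rcases le_or_gt k (n + 1) with hk | hk
  · have h : (n.choose k : K) * (n + 1) = (n + 1).choose k * ((n + 1 - k : ℕ) : K) := by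
      exact_mod_cast Nat.choose_mul_succ_eq n k
    rw [Nat.cast_sub hk] at h
    push_cast at h
    field_simp
    linear_combination h
  · simp [Nat.choose_eq_zero_of_lt hk, Nat.choose_eq_zero_of_lt (n.lt_succ_self.trans hk)]

theorem Nat.cast_choose_eq_mul_cast_choose_succ_succ (n k : ℕ) :
    (n.choose k : K) = (k + 1) / (n + 1) * ((n + 1).choose (k + 1) : K) := by
  have h : ((n + 1) * n.choose k : K) = (n + 1).choose (k + 1) * (k + 1) := by
    exact_mod_cast Nat.add_one_mul_choose_eq n k
  field_simp
  linear_combination h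

end ChooseCast

namespace Apery

def term (n k : ℕ) : ℚ := ((n + k).choose k : ℚ) ^ 2 * (n.choose k : ℚ) ^ 2

def number (n : ℕ) : ℚ := ∑ k ∈ range (n + 1), term n k

def certificate (n : ℕ) : ℕ → ℚ
  | 0 => 0
  | k + 1 => 4 * (2 * n + 1) * (k * (2 * k + 1) - (2 * n + 1) ^ 2) * term n k

theorem term_eq_zero_of_lt {n k : ℕ} (h : n < k) : term n k = 0 := by
  simp [term, Nat.choose_eq_zero_of_lt h]

theorem sum_range_term_of_lt {n N : ℕ} (h : n < N) :
    ∑ k ∈ range N, term n k = number n :=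
  (sum_subset (range_subset_range.mpr h) fun _ _ hkn =>
    term_eq_zero_of_lt (by simpa using hkn)).symm

theorem certificate_eq_zero_of_lt {n k : ℕ} (h : n + 1 < k) : certificate n k = 0 := by
  obtain ⟨j, rfl⟩ := Nat.exists_eq_add_of_lt h
  simp [certificate, term_eq_zero_of_lt (show n < n + 1 + j by omega)]

theorem recurrence_term_eq_sub_certificate (n k : ℕ) :
    ((n : ℚ) + 2) ^ 3 * term (n + 2) k
      - (2 * n + 3) * (17 * ((n : ℚ) + 1) ^ 2 + 17 * (n + 1) + 5) * term (n + 1) k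
      + ((n : ℚ) + 1) ^ 3 * term n k
      = certificate (n + 1) (k + 1) - certificate (n + 1) k := by
  rcases k with _ | k
  · simp only [term, certificate, add_zero, Nat.choose_zero_right]
    push_cast
    ring
  · -- upper indices as `+ 1` chains, the shape the ratio identities produce
    rw [show n + 2 = n + 1 + 1 from rfl]
    simp only [term, certificate, show n + 1 + 1 + (k + 1) = n + k + 1 + 1 + 1 by omega,
      show n + 1 + (k + 1) = n + k + 1 + 1 by omega, show n + (k + 1) = n + k + 1 by omega,
      show n + 1 + k = n + k + 1 by omega]
    rw [Nat.cast_choose_eq_mul_cast_choose_succ_left n (k + 1),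
      Nat.cast_choose_eq_mul_cast_choose_succ_left (n + k + 1) (k + 1),
      Nat.cast_choose_eq_mul_cast_choose_succ_succ (n + 1) k,
      Nat.cast_choose_eq_mul_cast_choose_succ_succ (n + k + 1) k,
      Nat.cast_choose_eq_mul_cast_choose_succ_left (n + 1) (k + 1),
      Nat.cast_choose_eq_mul_cast_choose_succ_left (n + k + 1 + 1) (k + 1)]
    push_cast
    field_simp
    ring

theorem number_recurrence (n : ℕ) :
    ((n : ℚ) + 2) ^ 3 * number (n + 2)
      - (2 * n + 3) * (17 * ((n : ℚ) + 1) ^ 2 + 17 * (n + 1) + 5) * number (n + 1)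
      + ((n : ℚ) + 1) ^ 3 * number n = 0 := by
  have h := sum_range_sub (certificate (n + 1)) (n + 3)
  simp only [← recurrence_term_eq_sub_certificate, sum_add_distrib, sum_sub_distrib,
    ← mul_sum, sum_range_term_of_lt (show n < n + 3 by omega),
    sum_range_term_of_lt (show n + 1 < n + 3 by omega),
    sum_range_term_of_lt (show n + 2 < n + 3 by omega),
    certificate_eq_zero_of_lt (show n + 1 + 1 < n + 3 by omega)] at h
  simpa [certificate] using h

end Apery

theorem apery_numbers_recurrence :
    let q : ℕ → ℤ := fun n => ∑ k ∈ range (n + 1),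
      ((n + k).choose k : ℤ) ^ 2 * (n.choose k : ℤ) ^ 2
    q 0 = 1 ∧ q 1 = 5 ∧
      ∀ n : ℕ, 1 ≤ n →
        ((n : ℤ) + 1) ^ 3 * q (n + 1) -
          (2 * n + 1) * (17 * (n : ℤ) ^ 2 + 17 * n + 5) * q n + (n : ℤ) ^ 3 * q (n - 1) = 0 := by
  intro q
  have hq (n : ℕ) : (q n : ℚ) = Apery.number n := by
    simp [q, Apery.number, Apery.term]
  refine ⟨by simp [q], by simp [q, sum_range_succ], fun n hn => ?_⟩
  obtain ⟨m, rfl⟩ := Nat.exists_eq_add_of_le' hn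
  rw [← Int.cast_inj (α := ℚ)]
  push_cast
  rw [hq, hq, hq]
  linear_combination Apery.number_recurrence m
end
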